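/- Under the hypotheses of the previous statement (d > t², M_{σσ'} = d^{c(σ⁻¹σ')-t} off-diagonal, 0 on diagonal), every eigenvalue of the matrix I + M lies in the interval [1 - t(t-1)/d, 1 + t(t-1)/d]. -/

import Mathlib

/-- The number of cycles (orbits, counting fixed points as cycles) of a
permutation of `Fin t`. -/
def cycleCount {t : ℕ} (σ : Equiv.Perm (Fin t)) : ℕ :=
  σ.cycleType.card + (Finset.univ.filter fun x => σ x = x).card

/-- The `t! × t!` matrix indexed by permutations of `[t]` with entries
`M_{σσ'} = d^(c(σ⁻¹σ') - t)` off-diagonal and `0` on the diagonal. -/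
noncomputable def permCycleMatrix (t d : ℕ) :
    Matrix (Equiv.Perm (Fin t)) (Equiv.Perm (Fin t)) ℝ :=
  fun σ σ' => if σ = σ' then 0 else (d : ℝ) ^ (cycleCount (σ⁻¹ * σ')) / (d : ℝ) ^ t

/-!
By Gershgorin's circle theorem every eigenvalue of `I + M` lies within distance
`∑_{σ'} M_{σσ'}` of the diagonal entry `1`, for some row `σ`. Since `M_{σσ'}` depends only
on `σ⁻¹σ'`, every row sum equals `d^{-t} ∑_{π ≠ 1} d^{c(π)}`. Writing a permutation of
`Fin (n + 1)` as `swap 0 p * τ` with `τ` fixing `0` gives, by induction on `n`,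
`∑_{π ∈ S_n} x^{c(π)} = x (x + 1) ⋯ (x + n - 1)`: for `p = 0` the point `0` is a cycle of its
own, otherwise it joins the cycle of `p`. Hence the row sum is `∏_{i < t} (1 + i/d) - 1`, which is
at most `t(t-1)/d` as soon as `t(t-1) ≤ d`.
-/

open Finset

namespace Equiv.Perm

variable {α : Type*} [Fintype α] [DecidableEq α]

-- Unlike in `cycleType`, fixed points count as cycles here.
def numCycles (σ : Perm α) : ℕ :=
  Multiset.card σ.cycleType + #{x | σ x = x}

theorem numCycles_add_card_support (σ : Perm α) :
    σ.numCycles + #σ.support = Multiset.card σ.cycleType + Fintype.card α := by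
  rw [numCycles, add_assoc, support, card_filter_add_card_filter_not, card_univ]

theorem numCycles_one : (1 : Perm α).numCycles = Fintype.card α := by
  simp [numCycles]

theorem card_cycleType_mul_of_isCycle {c ρ : Perm α} (hc : c.IsCycle) (h : c.Disjoint ρ) :
    Multiset.card (c * ρ).cycleType = Multiset.card ρ.cycleType + 1 := by
  rw [h.cycleType_mul, hc.cycleType, Multiset.card_add, Multiset.card_singleton, add_comm]

theorem numCycles_swap_mul_of_apply_eq_self {τ : Perm α} {a b : α} (hab : a ≠ b)
    (ha : τ a = a) (hb : τ b = b) : (swap a b * τ).numCycles + 1 = τ.numCycles := by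
  have hdisj : (swap a b).Disjoint τ := by
    rw [disjoint_iff_disjoint_support, support_swap hab]
    simp [Finset.disjoint_left, ha, hb]
  have hcard := card_cycleType_mul_of_isCycle (isCycle_swap hab) hdisj
  have hsupp := hdisj.card_support_mul
  rw [card_support_swap hab] at hsupp
  have := numCycles_add_card_support (swap a b * τ)
  have := numCycles_add_card_support τ
  omega

theorem numCycles_swap_mul_of_apply_ne_self {τ : Perm α} {a b : α}
    (ha : τ a = a) (hb : τ b ≠ b) : (swap a b * τ).numCycles + 1 = τ.numCycles := by
  have hab : a ≠ b := fun h => hb (h ▸ ha)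
  set g := swap a b * τ
  have hga : g a = b := by simp [g, ha]
  have hgb : g b ≠ a := by
    have hτb : τ b ≠ a := fun h => hab (τ.injective (h.trans ha.symm)).symm
    simpa [g, swap_apply_of_ne_of_ne hτb hb] using hτb
  -- Read backwards, `τ = swap a (g a) * g` splits `a` off its cycle in `g`: `IsCycle.swap_mul`.
  have hτ : τ = swap a (g a) * g := by simp [hga, g, ← mul_assoc]
  set c := g.cycleOf a
  have hc : c.IsCycle := g.isCycle_cycleOf (hga ▸ hab.symm)
  have hca : c a = g a := g.cycleOf_apply_self a
  have hcca : c (c a) ≠ a := by rwa [hca, g.cycleOf_apply_apply_self, hga]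
  have hmem : c ∈ g.cycleFactorsFinset :=
    cycleOf_mem_cycleFactorsFinset_iff.mpr (mem_support.mpr (hga ▸ hab.symm))
  set ρ := g * c⁻¹
  have hdisj : c.Disjoint ρ := (disjoint_mul_inv_of_mem_cycleFactorsFinset hmem).symm
  have hgcρ : g = c * ρ := by rw [hdisj.commute.eq]; simp [ρ]
  have hτcρ : τ = (swap a (c a) * c) * ρ := by rw [hτ, hca, hgcρ, mul_assoc]
  have hdisj' : (swap a (c a) * c).Disjoint ρ :=
    hdisj.mono (by rw [support_swap_mul_eq c a hcca]; exact sdiff_subset) le_rfl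
  have hcardτ := card_cycleType_mul_of_isCycle (hc.swap_mul (hca ▸ hga ▸ hab.symm) hcca) hdisj'
  have hcardg := card_cycleType_mul_of_isCycle hc hdisj
  rw [← hτcρ] at hcardτ
  rw [← hgcρ] at hcardg
  have hsupp : #τ.support + 1 = #g.support := by
    rw [hτ, support_swap_mul_eq g a (hga ▸ hgb), sdiff_singleton_eq_erase,
      card_erase_add_one (mem_support.mpr (hga ▸ hab.symm))]
  have := numCycles_add_card_support g
  have := numCycles_add_card_support τ
  omega

theorem numCycles_swap_mul {τ : Perm α} {a b : α} (hab : a ≠ b) (ha : τ a = a) :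
    (swap a b * τ).numCycles + 1 = τ.numCycles := by
  by_cases hb : τ b = b
  · exact numCycles_swap_mul_of_apply_eq_self hab ha hb
  · exact numCycles_swap_mul_of_apply_ne_self ha hb

theorem decomposeFin_symm_eq_swap_mul {n : ℕ} (p : Fin (n + 1)) (σ : Perm (Fin n)) :
    decomposeFin.symm (p, σ) = swap 0 p * decomposeFin.symm (0, σ) := by
  ext x
  cases x using Fin.cases <;> simp

theorem numCycles_decomposeFin_symm_zero {n : ℕ} (σ : Perm (Fin n)) :
    (decomposeFin.symm (0, σ)).numCycles = σ.numCycles + 1 := by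
  have hext : decomposeFin.symm (0, σ) = σ.extendDomain (finSuccAboveEquiv 0) := by
    ext x
    cases x using Fin.cases with
    | zero => simp [extendDomain_apply_not_subtype]
    | succ i =>
      have := extendDomain_apply_image σ (finSuccAboveEquiv 0) i
      simp only [finSuccAboveEquiv_apply, Fin.succAbove_zero] at this
      simp [this]
  have hcycleType : (decomposeFin.symm (0, σ)).cycleType = σ.cycleType := by
    rw [hext, cycleType_extendDomain]
  have hsupp : #(decomposeFin.symm (0, σ)).support = #σ.support := by
    rw [← sum_cycleType, ← sum_cycleType, hcycleType]
  have := numCycles_add_card_support (decomposeFin.symm (0, σ))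
  have := numCycles_add_card_support σ
  simp only [Fintype.card_fin, hcycleType, hsupp] at *
  omega

theorem numCycles_decomposeFin_symm_succ {n : ℕ} (i : Fin n) (σ : Perm (Fin n)) :
    (decomposeFin.symm (i.succ, σ)).numCycles = σ.numCycles := by
  have := numCycles_swap_mul (Fin.succ_ne_zero i).symm
    (decomposeFin_symm_apply_zero 0 σ)
  rw [← decomposeFin_symm_eq_swap_mul, numCycles_decomposeFin_symm_zero] at this
  omega

theorem sum_pow_numCycles {R : Type*} [CommSemiring R] (x : R) (n : ℕ) :
    ∑ σ : Perm (Fin n), x ^ σ.numCycles = ∏ i ∈ range n, (x + i) := by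
  induction n with
  | zero => simp [numCycles_one]
  | succ n ih =>
    rw [← decomposeFin.symm.sum_comp, Fintype.sum_prod_type, Fin.sum_univ_succ, prod_range_succ]
    simp only [numCycles_decomposeFin_symm_zero, numCycles_decomposeFin_symm_succ, pow_succ,
      ← sum_mul, sum_const, card_univ, Fintype.card_fin, ih, nsmul_eq_mul]
    ring

end Equiv.Perm

theorem prod_range_one_add_mul_le {R : Type*} [CommRing R] [LinearOrder R] [IsStrictOrderedRing R]
    {x : R} (hx : 0 ≤ x) (n : ℕ) (hn : n * (n - 1) * x ≤ 1) :
    ∏ i ∈ range n, (1 + i * x) ≤ 1 + n * (n - 1) * x := by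
  induction n with
  | zero => simp
  | succ n ih =>
    push_cast at hn ⊢
    have hprev : n * (n - 1) * x ≤ 1 := by nlinarith
    have hnx : (0 : R) ≤ n * x := by positivity
    rw [prod_range_succ]
    calc (∏ i ∈ range n, (1 + i * x)) * (1 + n * x)
        ≤ (1 + n * (n - 1) * x) * (1 + n * x) := by gcongr; exact ih hprev
      _ ≤ 1 + (n + 1) * (n + 1 - 1) * x := by nlinarith [mul_le_mul_of_nonneg_right hprev hnx]

theorem Matrix.hasEigenvalue_toEuclideanLin_iff {𝕜 n : Type*} [RCLike 𝕜] [Fintype n]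
    [DecidableEq n] {A : Matrix n n 𝕜} {μ : 𝕜} :
    Module.End.HasEigenvalue (toEuclideanLin A) μ ↔ Module.End.HasEigenvalue (toLin' A) μ := by
  rw [Module.End.hasEigenvalue_iff_mem_spectrum, Module.End.hasEigenvalue_iff_mem_spectrum,
    spectrum_toLin', spectrum_toLpLin]

theorem Matrix.exists_abs_sub_one_le_sum_of_hasEigenvalue_one_add {n : Type*} [Fintype n]
    [DecidableEq n] {M : Matrix n n ℝ} (hM : ∀ i j, 0 ≤ M i j) (hdiag : ∀ i, M i i = 0)
    {μ : ℝ} (hμ : Module.End.HasEigenvalue (toLin' (1 + M)) μ) :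
    ∃ k, |μ - 1| ≤ ∑ j, M k j := by
  obtain ⟨k, hk⟩ := eigenvalue_mem_ball hμ
  refine ⟨k, ?_⟩
  rw [Metric.mem_closedBall, Real.dist_eq, add_apply, one_apply_eq, hdiag, add_zero] at hk
  rw [← add_sum_erase _ _ (mem_univ k), hdiag, zero_add]
  refine hk.trans_eq (sum_congr rfl fun j hj => ?_)
  rw [add_apply, one_apply_ne (ne_of_mem_erase hj).symm, zero_add, Real.norm_of_nonneg (hM k j)]

section permCycleMatrix

open Equiv.Perm

theorem cycleCount_eq_numCycles {t : ℕ} (σ : Equiv.Perm (Fin t)) :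
    cycleCount σ = σ.numCycles :=
  rfl

theorem permCycleMatrix_nonneg (t d : ℕ) (σ σ' : Equiv.Perm (Fin t)) :
    0 ≤ permCycleMatrix t d σ σ' := by
  unfold permCycleMatrix; split_ifs <;> positivity

theorem permCycleMatrix_apply_self (t d : ℕ) (σ : Equiv.Perm (Fin t)) :
    permCycleMatrix t d σ σ = 0 :=
  if_pos rfl

theorem sum_permCycleMatrix_row {t d : ℕ} (hd : d ≠ 0) (σ : Equiv.Perm (Fin t)) :
    ∑ σ', permCycleMatrix t d σ σ' = ∏ i ∈ range t, (1 + i * (d : ℝ)⁻¹) - 1 := by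
  have hd' : (d : ℝ) ≠ 0 := Nat.cast_ne_zero.mpr hd
  have hfactor : ∀ i : ℕ, 1 + i * (d : ℝ)⁻¹ = (d + i) / d := fun i => by field_simp
  rw [← Equiv.sum_comp (Equiv.mulLeft σ)]
  simp only [permCycleMatrix, Equiv.coe_mulLeft, left_eq_mul, inv_mul_cancel_left,
    cycleCount_eq_numCycles]
  rw [sum_ite, sum_const_zero, zero_add, filter_ne', sum_erase_eq_sub (mem_univ 1),
    ← sum_div, sum_pow_numCycles, numCycles_one, Fintype.card_fin, div_self (pow_ne_zero t hd')]
  simp_rw [hfactor, prod_div_distrib, prod_const, card_range]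

end permCycleMatrix

theorem stmt_3_general (t d : ℕ) (hd : t ^ 2 < d) (μ : ℝ)
    (hμ : Module.End.HasEigenvalue
      (Matrix.toEuclideanLin (1 + permCycleMatrix t d)) μ) :
    1 - (t : ℝ) * ((t : ℝ) - 1) / d ≤ μ ∧ μ ≤ 1 + (t : ℝ) * ((t : ℝ) - 1) / d := by
  obtain ⟨k, hk⟩ := Matrix.exists_abs_sub_one_le_sum_of_hasEigenvalue_one_add
    (permCycleMatrix_nonneg t d) (permCycleMatrix_apply_self t d)
    (Matrix.hasEigenvalue_toEuclideanLin_iff.mp hμ)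
  rw [sum_permCycleMatrix_row (by omega)] at hk
  have hsmall : (t : ℝ) * (t - 1) * (d : ℝ)⁻¹ ≤ 1 := by
    have ht2 : (t : ℝ) ^ 2 < d := by exact_mod_cast hd
    rw [← div_eq_mul_inv, div_le_one (by nlinarith)]
    nlinarith
  have hbound := prod_range_one_add_mul_le (by positivity) t hsmall
  rw [← div_eq_mul_inv] at hbound
  constructor <;> linarith [abs_le.mp hk]

/-- For `d > t²`, every eigenvalue of `I + M` lies in `[1 - t(t-1)/d, 1 + t(t-1)/d]`. -/
theorem stmt_3 (t d : ℕ) (ht : 0 < t) (hd : t ^ 2 < d) (μ : ℝ)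
    (hμ : Module.End.HasEigenvalue
      (Matrix.toEuclideanLin (1 + permCycleMatrix t d)) μ) :
    1 - (t : ℝ) * ((t : ℝ) - 1) / d ≤ μ ∧ μ ≤ 1 + (t : ℝ) * ((t : ℝ) - 1) / d :=
  stmt_3_general t d hd μ hμ
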